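/- Let (X,d,μ) be a metric measure space and p ∈ [1,∞). Suppose μ satisfies a locally uniform comparability condition. Then for every f ∈ L^p_loc(X,μ) and every x ∈ X there exist constants r₀ > 0, C > 0 and a neighborhood V of x such that for every r ∈ (0,r₀): ∫_V |A_r f|^p dμ ≤ C ∫_V |f|^p dμ < ∞, where A_r f(y) := ⨍_{B_r(y)} f dμ. -/

import Mathlib

open MeasureTheory Filter Metric Set
open scoped ENNReal Topology

/-!
By Jensen's inequality, `|A_r f (y)|^p` is at most the average of `|f|^p` over `B_r(y)`.
Integrating over `y ∈ V` and exchanging the order of integration, each `z` is weighted by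
`∫_{B_r(z)} μ(B_r(y))⁻¹ dy`, which the comparability condition bounds by `C`; hence
`∫_V |A_r f|^p ≤ C ∫_U |f|^p` whenever `U` contains the `r`-neighbourhood of `V`. Take
`V = B_s(x)` and `U = B_{2s}(x)`. Since the final constant may depend on `f`, it can absorb
the ratio `∫_U |f|^p / ∫_V |f|^p`; if that ratio is infinite, shrinking `s` by half makes the
right-hand side `0`.

Positivity and finiteness of the measure of balls make `μ` σ-finite and `X` separable, which
is what Tonelli's theorem and the measurability of `y ↦ μ(B_r(y))` require.
-/

theorem MeasureTheory.enorm_average_rpow_le {α E : Type*} [MeasurableSpace α]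
    [NormedAddCommGroup E] [NormedSpace ℝ E] {μ : Measure α} {f : α → E}
    (hf : AEStronglyMeasurable f μ) {p : ℝ} (hp : 1 ≤ p) :
    ‖⨍ x, f x ∂μ‖ₑ ^ p ≤ ⨍⁻ x, ‖f x‖ₑ ^ p ∂μ := by
  have hp₀ : 0 < p := zero_lt_one.trans_le hp
  by_cases hμ : μ univ = 0 ∨ μ univ = ∞
  · -- the average is `0` by convention
    rw [average_eq, measureReal_def, (ENNReal.toReal_eq_zero_iff _).2 hμ, inv_zero, zero_smul,
      enorm_zero, ENNReal.zero_rpow_of_pos hp₀]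
    exact zero_le
  push Not at hμ
  have : IsFiniteMeasure μ := ⟨hμ.2.lt_top⟩
  have : NeZero μ := ⟨fun h => hμ.1 (by simp [h])⟩
  set P := (μ univ)⁻¹ • μ
  calc ‖⨍ x, f x ∂μ‖ₑ ^ p = ‖∫ x, f x ∂P‖ₑ ^ p := by rw [average_eq']
    _ ≤ eLpNorm f 1 P ^ p := by
        rw [eLpNorm_one_eq_lintegral_enorm]
        gcongr
        exact enorm_integral_le_lintegral_enorm f
    _ ≤ eLpNorm f (ENNReal.ofReal p) P ^ p := by
        gcongr
        exact eLpNorm_le_eLpNorm_of_exponent_le (by simpa using hp) (hf.smul_measure _)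
    _ = ⨍⁻ x, ‖f x‖ₑ ^ p ∂μ := by
        rw [eLpNorm_eq_lintegral_rpow_enorm_toReal (by simpa using hp₀) ENNReal.ofReal_ne_top,
          ENNReal.toReal_ofReal hp₀.le, ← ENNReal.rpow_mul, one_div_mul_cancel hp₀.ne',
          ENNReal.rpow_one, laverage_eq']

theorem Metric.exists_maximal_isSeparated {X : Type*} [PseudoEMetricSpace X] (ε : ℝ≥0∞)
    (s : Set X) : ∃ N, Maximal (fun N => N ⊆ s ∧ IsSeparated ε N) N :=
  zorn_subset _ fun c hcS hc => ⟨⋃₀ c, ⟨sUnion_subset fun _ hN => (hcS hN).1,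
    (pairwise_sUnion hc.directedOn).2 fun _ hN => (hcS hN).2⟩, fun _ => subset_sUnion_of_mem⟩

section

variable {X : Type*} [PseudoMetricSpace X] [MeasurableSpace X] {μ : Measure X}

theorem sigmaFinite_of_measure_ball_lt_top
    (h : ∀ (x : X) (r : ℝ), 0 < r → μ (ball x r) < ∞) : SigmaFinite μ := by
  rcases isEmpty_or_nonempty X with hX | ⟨⟨x⟩⟩
  · rw [μ.eq_zero_of_isEmpty]
    infer_instance
  refine Measure.sigmaFinite_of_countable (countable_range fun n : ℕ => ball x (n + 1)) ?_ ?_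
  · rintro _ ⟨n, rfl⟩
    exact h x _ n.cast_add_one_pos
  · rw [sUnion_range, iUnion_ball_nat_succ]

/-- A maximal `ε`-separated set is countable, since the disjoint balls of radius `ε / 2` around
its points have positive measure. -/
theorem secondCountableTopology_of_measure_ball_pos [OpensMeasurableSpace X] [SFinite μ]
    (h : ∀ (x : X) (r : ℝ), 0 < r → 0 < μ (ball x r)) : SecondCountableTopology X := by
  refine secondCountable_of_almost_dense_set fun ε hε => ?_
  obtain ⟨N, hN⟩ := exists_maximal_isSeparated (ε.toNNReal : ℝ≥0∞) (univ : Set X)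
  have hdisj : Pairwise (Function.onFun Disjoint fun y : N => ball (y : X) (ε / 2)) := by
    intro y z hyz
    have hyz : ENNReal.ofReal ε < edist (y : X) z := hN.1.2 y.2 z.2 (Subtype.val_injective.ne hyz)
    rw [edist_dist, ENNReal.ofReal_lt_ofReal_iff_of_nonneg hε.le] at hyz
    exact ball_disjoint_ball (by linarith)
  have hN_countable : N.Countable := by
    have := Measure.countable_meas_pos_of_disjoint_iUnion (μ := μ)
      (fun _ => measurableSet_ball) hdisj
    simp only [h _ _ (half_pos hε), ofPred_true, countable_univ_iff] at this
    exact countable_coe_iff.1 this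
  refine ⟨N, hN_countable, fun x => ?_⟩
  obtain ⟨y, hy, hxy⟩ := IsCover.of_maximal_isSeparated (ε := ε.toNNReal) hN (mem_univ x)
  have hxy : edist x y ≤ ENNReal.ofReal ε := hxy
  rw [edist_dist, ENNReal.ofReal_le_ofReal_iff hε.le] at hxy
  exact ⟨y, hy, hxy⟩

theorem measurableSet_setOf_dist_lt [SecondCountableTopology X] [OpensMeasurableSpace X]
    (r : ℝ) : MeasurableSet {q : X × X | dist q.2 q.1 < r} :=
  (isOpen_lt (continuous_snd.dist continuous_fst) continuous_const).measurableSet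

theorem measurable_measure_ball [SecondCountableTopology X] [OpensMeasurableSpace X] [SFinite μ]
    (r : ℝ) : Measurable fun y => μ (ball y r) :=
  measurable_measure_prodMk_left (measurableSet_setOf_dist_lt r)

theorem setLIntegral_inv_measure_ball_le {z : X} {r : ℝ} {C : ℝ≥0∞} (hC₀ : C ≠ 0) (hC : C ≠ ∞)
    (hcomp : ∀ᵐ y ∂μ.restrict (ball z r), μ (ball z r) ≤ C * μ (ball y r)) :
    ∫⁻ y in ball z r, (μ (ball y r))⁻¹ ∂μ ≤ C := by
  calc ∫⁻ y in ball z r, (μ (ball y r))⁻¹ ∂μ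
      ≤ ∫⁻ _ in ball z r, C * (μ (ball z r))⁻¹ ∂μ := by
        refine lintegral_mono_ae ?_
        filter_upwards [hcomp] with y hy
        rw [← div_eq_mul_inv, ← ENNReal.inv_div (Or.inl hC) (Or.inl hC₀)]
        exact ENNReal.inv_le_inv.2 (ENNReal.div_le_of_le_mul' hy)
    _ = C * ((μ (ball z r))⁻¹ * μ (ball z r)) := by rw [setLIntegral_const, mul_assoc]
    _ ≤ C := mul_le_of_le_one_right' (ENNReal.inv_mul_le_one _)

theorem lintegral_setLAverage_ball_le [SecondCountableTopology X] [OpensMeasurableSpace X]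
    [SFinite μ] {g : X → ℝ≥0∞} {U V : Set X} {r : ℝ} {C : ℝ≥0∞}
    (hg : AEMeasurable g (μ.restrict U)) (hV : MeasurableSet V) (hVU : ∀ y ∈ V, ball y r ⊆ U)
    (hC₀ : C ≠ 0) (hC : C ≠ ∞)
    (hcomp : ∀ᵐ z ∂μ.restrict U, ∀ᵐ y ∂μ.restrict (ball z r),
      μ (ball z r) ≤ C * μ (ball y r)) :
    ∫⁻ y in V, ⨍⁻ z in ball y r, g z ∂μ ∂μ ≤ C * ∫⁻ z in U, g z ∂μ := by
  set φ : X → ℝ≥0∞ := fun y => (μ (ball y r))⁻¹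
  have hφ : Measurable φ := (measurable_measure_ball r).inv
  set F : X × X → ℝ≥0∞ := {q | dist q.2 q.1 < r}.indicator fun q => φ q.1 * g q.2
  have hF : AEMeasurable F ((μ.restrict V).prod (μ.restrict U)) :=
    ((hφ.comp measurable_fst).aemeasurable.mul hg.comp_snd).indicator
      (measurableSet_setOf_dist_lt r)
  have hF_slice (z : X) : (fun y => F (y, z)) = fun y => (ball z r).indicator φ y * g z := by
    ext y
    by_cases h : dist z y < r <;> simp [F, indicator, h, mem_ball, dist_comm y z]
  calc ∫⁻ y in V, ⨍⁻ z in ball y r, g z ∂μ ∂μ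
      ≤ ∫⁻ y in V, ∫⁻ z in U, F (y, z) ∂μ ∂μ := by
        refine setLIntegral_mono' hV fun y hy => ?_
        rw [setLAverage_eq, ENNReal.div_eq_inv_mul]
        calc φ y * ∫⁻ z in ball y r, g z ∂μ
            ≤ ∫⁻ z in ball y r, φ y * g z ∂μ := lintegral_const_mul_le _ _
          _ = ∫⁻ z in U, F (y, z) ∂μ := by
            rw [← Measure.restrict_restrict_of_subset (hVU y hy),
              ← lintegral_indicator measurableSet_ball]
            rfl
    _ = ∫⁻ z in U, ∫⁻ y in V, F (y, z) ∂μ ∂μ := lintegral_lintegral_swap hF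
    _ ≤ ∫⁻ z in U, C * g z ∂μ := by
        refine lintegral_mono_ae ?_
        filter_upwards [hcomp] with z hz
        rw [hF_slice, lintegral_mul_const _ (hφ.indicator measurableSet_ball)]
        gcongr
        calc ∫⁻ y in V, (ball z r).indicator φ y ∂μ
            ≤ ∫⁻ y, (ball z r).indicator φ y ∂μ := setLIntegral_le_lintegral _ _
          _ ≤ C := by
              rw [lintegral_indicator measurableSet_ball]
              exact setLIntegral_inv_measure_ball_le hC₀ hC hz
    _ = C * ∫⁻ z in U, g z ∂μ := lintegral_const_mul' _ _ hC

theorem lintegral_enorm_setAverage_ball_rpow_le [SecondCountableTopology X]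
    [OpensMeasurableSpace X] [SFinite μ] {E : Type*} [NormedAddCommGroup E] [NormedSpace ℝ E]
    {f : X → E} (hf : AEStronglyMeasurable f μ) {p : ℝ} (hp : 1 ≤ p) {U V : Set X} {r : ℝ}
    {C : ℝ≥0∞} (hV : MeasurableSet V) (hVU : ∀ y ∈ V, ball y r ⊆ U) (hC₀ : C ≠ 0) (hC : C ≠ ∞)
    (hcomp : ∀ᵐ z ∂μ.restrict U, ∀ᵐ y ∂μ.restrict (ball z r),
      μ (ball z r) ≤ C * μ (ball y r)) :
    ∫⁻ y in V, ‖⨍ z in ball y r, f z ∂μ‖ₑ ^ p ∂μ ≤ C * ∫⁻ z in U, ‖f z‖ₑ ^ p ∂μ :=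
  (lintegral_mono fun _ => enorm_average_rpow_le hf.restrict hp).trans
    (lintegral_setLAverage_ball_le (hf.restrict.enorm.pow_const p) hV hVU hC₀ hC hcomp)

theorem ENNReal.exists_pos_le_ofReal_mul {K m : ℝ≥0∞} (hK : K ≠ ∞) (hm : m ≠ 0) :
    ∃ c : ℝ, 0 < c ∧ K ≤ ENNReal.ofReal c * m := by
  have hc : 0 < (K / m).toReal + 1 := by positivity
  refine ⟨_, hc, (ENNReal.div_le_iff_le_mul (Or.inl hm) (Or.inr (by simpa using hc))).1 ?_⟩
  exact (ENNReal.le_ofReal_iff_toReal_le (ENNReal.div_ne_top hK hm) hc.le).2 (by linarith)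

theorem exists_mul_setLIntegral_ball_two_mul_le (g : X → ℝ≥0∞) (x : X) {t : ℝ} (ht : 0 < t)
    {K : ℝ≥0∞} (hK : K ≠ ∞) (hg : ∫⁻ z in ball x t, g z ∂μ ≠ ∞) :
    ∃ s, 0 < s ∧ 2 * s ≤ t ∧ ∃ c : ℝ, 0 < c ∧
      K * ∫⁻ z in ball x (2 * s), g z ∂μ ≤ ENNReal.ofReal c * ∫⁻ z in ball x s, g z ∂μ := by
  by_cases hm : ∫⁻ z in ball x (t / 2), g z ∂μ = 0
  · refine ⟨t / 4, by positivity, by linarith, 1, one_pos, ?_⟩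
    rw [show 2 * (t / 4) = t / 2 by ring, hm, mul_zero]
    exact zero_le
  · obtain ⟨c, hc, hKc⟩ := ENNReal.exists_pos_le_ofReal_mul (ENNReal.mul_ne_top hK hg) hm
    exact ⟨t / 2, by positivity, by linarith, c, hc, by rwa [mul_div_cancel₀ t two_ne_zero]⟩

end

theorem ENNReal.ofReal_abs_rpow (x : ℝ) {p : ℝ} (hp : 0 ≤ p) :
    ENNReal.ofReal (|x| ^ p) = ‖x‖ₑ ^ p := by
  rw [Real.enorm_eq_ofReal_abs, ENNReal.ofReal_rpow_of_nonneg (abs_nonneg x) hp]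

/-- On a metric measure space whose measure satisfies a locally uniform
comparability condition, for every `f ∈ L^p_loc` and every point `x` there are constants
`r₀, C > 0` and a neighborhood `V` of `x` such that for every `r ∈ (0, r₀)`,
`∫_V |A_r f|^p dμ ≤ C ∫_V |f|^p dμ < ∞`. -/
theorem stmt_1 {X : Type*} [MetricSpace X] [MeasurableSpace X] [BorelSpace X]
    (μ : Measure X)
    (hμ : ∀ (x : X) (r : ℝ), 0 < r → 0 < μ (ball x r) ∧ μ (ball x r) < ∞)
    (p : ℝ) (hp : 1 ≤ p)
    (hcomp : ∀ x₀ : X, ∃ V ∈ 𝓝 x₀, ∃ r₀ C : ℝ, 0 < r₀ ∧ 0 < C ∧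
      ∀ᵐ x ∂μ.restrict V, ∀ r : ℝ, 0 < r → r < r₀ →
        ∀ᵐ y ∂μ.restrict (ball x r), μ (ball x r) ≤ ENNReal.ofReal C * μ (ball y r))
    (f : X → ℝ) (hfm : AEMeasurable f μ)
    (hfloc : ∀ x : X, ∃ V ∈ 𝓝 x, ∫⁻ y in V, ENNReal.ofReal (|f y| ^ p) ∂μ < ∞)
    (x : X) :
    ∃ r₀ C : ℝ, 0 < r₀ ∧ 0 < C ∧ ∃ V ∈ 𝓝 x, ∀ r : ℝ, 0 < r → r < r₀ →
      ∫⁻ y in V, ENNReal.ofReal (|⨍ z in ball y r, f z ∂μ| ^ p) ∂μ ≤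
          ENNReal.ofReal C * ∫⁻ y in V, ENNReal.ofReal (|f y| ^ p) ∂μ ∧
        ∫⁻ y in V, ENNReal.ofReal (|f y| ^ p) ∂μ < ∞ := by
  simp only [ENNReal.ofReal_abs_rpow _ (zero_le_one.trans hp)] at hfloc ⊢
  have := sigmaFinite_of_measure_ball_lt_top fun x r hr => (hμ x r hr).2
  have := secondCountableTopology_of_measure_ball_pos fun x r hr => (hμ x r hr).1
  obtain ⟨Vc, hVc, r₁, C, hr₁, hC, hcompx⟩ := hcomp x
  obtain ⟨W, hW, hWfin⟩ := hfloc x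
  obtain ⟨t, ht, htsub⟩ := Metric.mem_nhds_iff.1 (inter_mem hVc hW)
  have hfin : ∫⁻ z in ball x t, ‖f z‖ₑ ^ p ∂μ < ∞ :=
    (lintegral_mono_set (htsub.trans inter_subset_right)).trans_lt hWfin
  obtain ⟨s, hs, hst, c, hc, hdoubling⟩ :=
    exists_mul_setLIntegral_ball_two_mul_le _ x ht ENNReal.ofReal_ne_top hfin.ne
  refine ⟨min r₁ s, c, lt_min hr₁ hs, hc, ball x s, ball_mem_nhds x hs, fun r hr hr₀ => ⟨?_,
    (lintegral_mono_set (ball_subset_ball (by linarith))).trans_lt hfin⟩⟩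
  have hcomp_s : ∀ᵐ z ∂μ.restrict (ball x (2 * s)), ∀ᵐ y ∂μ.restrict (ball z r),
      μ (ball z r) ≤ ENNReal.ofReal C * μ (ball y r) :=
    (ae_restrict_of_ae_restrict_of_subset ((ball_subset_ball hst).trans
      (htsub.trans inter_subset_left)) hcompx).mono fun z hz =>
        hz r hr (hr₀.trans_le (min_le_left _ _))
  refine (lintegral_enorm_setAverage_ball_rpow_le hfm.aestronglyMeasurable hp measurableSet_ball
    (fun y hy => ball_subset_ball' ?_) (ENNReal.ofReal_pos.2 hC).ne' ENNReal.ofReal_ne_top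
    hcomp_s).trans hdoubling
  linarith [mem_ball.1 hy, hr₀.trans_le (min_le_right _ _)]
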